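/- arXiv:2001.00469 — 2 statements merged into one kernel-verified Lean document; each statement's English description precedes it below -/
import Mathlib

section
/- If n ≥ 3 is even and m ≥ 1, then the packing chromatic number of FSSD_m(S'(C_n)) equals 3, where S'(C_n) = C_n ⋆ K_1 is the splitting graph of the cycle C_n. -/
open SimpleGraph

/-- A `k`-packing coloring: colors in `{1,…,k}`, and distinct vertices with the same
color `i` are at distance greater than `i`. -/
def IsPackingColoring {V : Type*} (G : SimpleGraph V) (k : ℕ) (c : V → ℕ) : Prop :=
  (∀ v, 1 ≤ c v ∧ c v ≤ k) ∧
  ∀ u v : V, u ≠ v → c u = c v → (c u : ℕ∞) < G.edist u v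

/-- The packing chromatic number: the least `k` admitting a `k`-packing coloring. -/
noncomputable def packingChromaticNumber {V : Type*} (G : SimpleGraph V) : ℕ :=
  sInf {k | ∃ c : V → ℕ, IsPackingColoring G k c}

/-- The finite super subdivision `FSSD_m(G)`: each edge `uv` of `G` is replaced by
`m` new common neighbors of `u` and `v` (the original edge is deleted). -/
def FSSD {V : Type*} (G : SimpleGraph V) (m : ℕ) :
    SimpleGraph (V ⊕ (G.edgeSet × Fin m)) where
  Adj x y :=
    match x, y with
    | Sum.inl u, Sum.inr e => u ∈ (e.1 : Sym2 V)
    | Sum.inr e, Sum.inl u => u ∈ (e.1 : Sym2 V)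
    | _, _ => False
  symm := ⟨by rintro (u | e) (v | f) h <;> simp_all⟩
  loopless := ⟨by rintro (u | e) h <;> simp_all⟩

/-- The neighborhood corona `G ⋆ H`: one copy of `G` and one copy of `H` for each
vertex of `G`; each vertex of the `i`-th copy of `H` is joined to all neighbors of
the `i`-th vertex of `G`. -/
def ncorona {V₁ V₂ : Type*} (G : SimpleGraph V₁) (H : SimpleGraph V₂) :
    SimpleGraph (V₁ ⊕ (V₁ × V₂)) where
  Adj x y :=
    match x, y with
    | Sum.inl u, Sum.inl v => G.Adj u v
    | Sum.inl u, Sum.inr p => G.Adj u p.1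
    | Sum.inr p, Sum.inl u => G.Adj u p.1
    | Sum.inr p, Sum.inr q => p.1 = q.1 ∧ H.Adj p.2 q.2
  symm := ⟨by rintro (u | p) (v | q) h <;> simp_all [adj_comm]⟩
  loopless := ⟨by rintro (u | p) h <;> simp_all⟩

/-- The splitting graph `S'(G) = G ⋆ K₁`. -/
def splittingGraph {V : Type*} (G : SimpleGraph V) : SimpleGraph (V ⊕ (V × Fin 1)) :=
  ncorona G (⊥ : SimpleGraph (Fin 1))


section Aux

open SimpleGraph

variable {V : Type*} {H : SimpleGraph V} {m : ℕ}

lemma fssd_not_adj_inl (u v : V) : ¬ (FSSD H m).Adj (Sum.inl u) (Sum.inl v) := fun h => h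

lemma fssd_not_adj_inr (e f : H.edgeSet × Fin m) :
    ¬ (FSSD H m).Adj (Sum.inr e) (Sum.inr f) := fun h => h

lemma fssd_walk_aux {x y : V} :
    ∀ (p : (FSSD H m).Walk (Sum.inl x) (Sum.inl y)), p.length ≤ 3 → x = y ∨ H.Adj x y := by
  intro p hp
  cases p with
  | nil => exact Or.inl rfl
  | @cons _ b _ h q =>
    cases b with
    | inl v => exact absurd h (fssd_not_adj_inl _ _)
    | inr e =>
      cases q with
      | @cons _ b2 _ h2 r =>
        cases b2 with
        | inr f => exact absurd h2 (fssd_not_adj_inr _ _)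
        | inl z =>
          cases r with
          | nil =>
            by_cases hxy : x = y
            · exact Or.inl hxy
            · right
              have hx : x ∈ (e.1.1 : Sym2 V) := h
              have hy : y ∈ (e.1.1 : Sym2 V) := h2
              have hse : (e.1.1 : Sym2 V) = s(x, y) :=
                (Sym2.mem_and_mem_iff hxy).mp ⟨hx, hy⟩
              have he := e.1.2
              rw [hse, SimpleGraph.mem_edgeSet] at he
              exact he
          | @cons _ b3 _ h3 r2 =>
            cases b3 with
            | inl w => exact absurd h3 (fssd_not_adj_inl _ _)
            | inr f =>
              cases r2 with
              | @cons _ b4 _ h4 r3 =>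
                simp only [SimpleGraph.Walk.length_cons] at hp
                omega

lemma fssd_edist_gt {x y : V} (hne : x ≠ y) (hadj : ¬ H.Adj x y) :
    (3 : ℕ∞) < (FSSD H m).edist (Sum.inl x) (Sum.inl y) := by
  by_contra hle
  push_neg at hle
  have hnt : (FSSD H m).edist (Sum.inl x) (Sum.inl y) ≠ ⊤ := by
    intro h; rw [h] at hle; exact absurd hle (by simp)
  obtain ⟨p, hp⟩ := SimpleGraph.exists_walk_of_edist_ne_top hnt
  have hcast : (p.length : ℕ∞) ≤ ((3 : ℕ) : ℕ∞) := by
    rw [hp]; exact_mod_cast hle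
  have hlen : p.length ≤ 3 := by exact_mod_cast hcast
  rcases fssd_walk_aux p hlen with h | h
  exacts [hne h, hadj h]

/-- parity on the vertex set of the splitting graph of a cycle -/
def spar {n : ℕ} : (Fin n ⊕ (Fin n × Fin 1)) → ℕ
  | Sum.inl i => i.val
  | Sum.inr p => p.1.val

lemma cycle_parity {n : ℕ} (hn2 : 2 ≤ n) (hpar : Even n) {u v : Fin n}
    (h : (SimpleGraph.cycleGraph n).Adj u v) : u.val % 2 ≠ v.val % 2 := by
  rw [SimpleGraph.cycleGraph_adj'] at h
  obtain ⟨k, hk⟩ := hpar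
  have hu := u.isLt
  have hv := v.isLt
  have key : ∀ a b : Fin n, (a - b).val = 1 → a.val % 2 ≠ b.val % 2 := by
    intro a b hab
    rw [Fin.sub_def] at hab
    simp only [Fin.val_mk] at hab
    have ha := a.isLt
    have hb := b.isLt
    have ht : (n - b.val + a.val) % n = n - b.val + a.val ∨
        (n - b.val + a.val) % n = n - b.val + a.val - n := by
      rcases lt_or_ge (n - b.val + a.val) n with hlt | hge
      · exact Or.inl (Nat.mod_eq_of_lt hlt)
      · right
        rw [Nat.mod_eq_sub_mod hge, Nat.mod_eq_of_lt (by omega)]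
    omega
  rcases h with h | h
  · exact key u v h
  · exact (key v u h).symm

lemma splitting_parity {n : ℕ} (hn2 : 2 ≤ n) (hpar : Even n)
    {x y : Fin n ⊕ (Fin n × Fin 1)}
    (h : (splittingGraph (SimpleGraph.cycleGraph n)).Adj x y) :
    spar x % 2 ≠ spar y % 2 := by
  cases x with
  | inl u =>
    cases y with
    | inl v => exact cycle_parity hn2 hpar h
    | inr p => exact cycle_parity hn2 hpar h
  | inr p =>
    cases y with
    | inl v => exact (cycle_parity hn2 hpar h).symm
    | inr q => exact absurd h (fun hh => hh.2.elim)

end Aux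


/-- for even `n ≥ 3`, `χ_ρ(FSSD_m(S'(C_n))) = 3`. -/


theorem stmt_14 (n m : ℕ) (hn : 3 ≤ n) (hpar : Even n) (hm : 1 ≤ m) :
    packingChromaticNumber (FSSD (splittingGraph (SimpleGraph.cycleGraph n)) m) = 3 := by
  set H := splittingGraph (SimpleGraph.cycleGraph n) with hH
  set G' := FSSD H m with hG'
  have hn2 : 2 ≤ n := by omega
  -- the 3-packing coloring
  have h3mem : ∃ c, IsPackingColoring G' 3 c := by
    refine ⟨fun z => match z with
      | Sum.inl x => if spar x % 2 = 0 then 2 else 3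
      | Sum.inr _ => 1, fun v => ?_, fun u v hne hceq => ?_⟩
    · rcases v with x | e
      · by_cases hx : spar x % 2 = 0 <;> simp [hx]
      · simp
    · rcases u with x | e <;> rcases v with y | f
      · -- both original vertices
        have hparxy : spar x % 2 = spar y % 2 := by
          by_cases hx : spar x % 2 = 0 <;> by_cases hy : spar y % 2 = 0 <;>
            simp [hx, hy] at hceq ⊢ <;> omega
        have hxy : x ≠ y := fun h => hne (by rw [h])
        have hnadj : ¬ H.Adj x y := fun h => splitting_parity hn2 hpar h hparxy
        have hgt : (3 : ℕ∞) < G'.edist (Sum.inl x) (Sum.inl y) :=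
          fssd_edist_gt hxy hnadj
        have hle : ((if spar x % 2 = 0 then 2 else 3 : ℕ) : ℕ∞) ≤ 3 := by
          split_ifs <;> norm_num
        exact lt_of_le_of_lt hle hgt
      · by_cases hx : spar x % 2 = 0 <;> simp [hx] at hceq
      · by_cases hy : spar y % 2 = 0 <;> simp [hy] at hceq
      · -- both subdivision vertices, color 1
        have h0 : G'.edist (Sum.inr e) (Sum.inr f) ≠ 0 :=
          fun h => hne (SimpleGraph.edist_eq_zero_iff.mp h)
        have h1 : G'.edist (Sum.inr e) (Sum.inr f) ≠ 1 :=
          fun h => fssd_not_adj_inr e f (SimpleGraph.edist_eq_one_iff_adj.mp h)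
        have : (1 : ℕ∞) ≤ G'.edist (Sum.inr e) (Sum.inr f) :=
          ENat.one_le_iff_ne_zero.mpr h0
        simpa using lt_of_le_of_ne this (Ne.symm h1)
  -- no 2-packing coloring
  have h2not : ¬ ∃ c, IsPackingColoring G' 2 c := by
    rintro ⟨c, hc1, hc2⟩
    -- concrete vertices
    have h0n : 0 < n := by omega
    have h1n : 1 < n := by omega
    have h2n : 2 < n := by omega
    set u0 : Fin n := ⟨0, h0n⟩
    set u1 : Fin n := ⟨1, h1n⟩
    set u2 : Fin n := ⟨2, h2n⟩
    have hadj01 : (SimpleGraph.cycleGraph n).Adj u0 u1 := by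
      rw [SimpleGraph.cycleGraph_adj']
      right
      rw [Fin.sub_def]
      simp only [Fin.val_mk]
      have : n - (0 : ℕ) + 1 = n + 1 := by omega
      rw [this, Nat.add_mod_left, Nat.mod_eq_of_lt (by omega)]
    have hadj12 : (SimpleGraph.cycleGraph n).Adj u1 u2 := by
      rw [SimpleGraph.cycleGraph_adj']
      right
      rw [Fin.sub_def]
      simp only [Fin.val_mk]
      have : n - (1 : ℕ) + 2 = n + 1 := by omega
      rw [this, Nat.add_mod_left, Nat.mod_eq_of_lt (by omega)]
    have hH01 : H.Adj (Sum.inl u0) (Sum.inl u1) := hadj01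
    have hH12 : H.Adj (Sum.inl u1) (Sum.inl u2) := hadj12
    set e1 : H.edgeSet := ⟨s(Sum.inl u0, Sum.inl u1), hH01⟩
    set e2 : H.edgeSet := ⟨s(Sum.inl u1, Sum.inl u2), hH12⟩
    set i0 : Fin m := ⟨0, hm⟩
    set A : (Fin n ⊕ (Fin n × Fin 1)) ⊕ (H.edgeSet × Fin m) := Sum.inl (Sum.inl u0)
    set Vv : (Fin n ⊕ (Fin n × Fin 1)) ⊕ (H.edgeSet × Fin m) := Sum.inl (Sum.inl u1)
    set B : (Fin n ⊕ (Fin n × Fin 1)) ⊕ (H.edgeSet × Fin m) := Sum.inr (e1, i0)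
    set B' : (Fin n ⊕ (Fin n × Fin 1)) ⊕ (H.edgeSet × Fin m) := Sum.inr (e2, i0)
    have hAB : G'.Adj A B := Sym2.mem_mk_left _ _
    have hBV : G'.Adj B Vv := Sym2.mem_mk_right _ _
    have hVB' : G'.Adj Vv B' := Sym2.mem_mk_left _ _
    -- adjacent vertices get distinct colors
    have hdiff : ∀ a b, G'.Adj a b → c a ≠ c b := by
      intro a b hab hceq
      have hlt := hc2 a b hab.ne hceq
      have hle : G'.edist a b ≤ 1 := by
        simpa using SimpleGraph.edist_le hab.toWalk
      have h1 : (1 : ℕ∞) ≤ (c a : ℕ∞) := by exact_mod_cast (hc1 a).1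
      exact lt_irrefl _ (lt_of_le_of_lt h1 (lt_of_lt_of_le hlt hle))
    -- two vertices joined by a path of length 2 can't both get color 2
    have hnot2 : ∀ a b mid, a ≠ b → G'.Adj a mid → G'.Adj mid b →
        c a = 2 → c b = 2 → False := by
      intro a b mid hne h1 h2 ha hb
      have hlt := hc2 a b hne (by rw [ha, hb])
      have hle : G'.edist a b ≤ 2 := by
        have := SimpleGraph.edist_le (SimpleGraph.Walk.cons h1 h2.toWalk)
        simpa using this
      rw [ha] at hlt
      exact lt_irrefl _ (lt_of_lt_of_le (by exact_mod_cast hlt) hle)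
    have hu01 : u0 ≠ u1 := by simp [u0, u1]
    have hu12 : u1 ≠ u2 := by simp [u1, u2]
    have hu02 : u0 ≠ u2 := by simp [u0, u2]
    have hAV : A ≠ Vv := by
      simp only [A, Vv, ne_eq, Sum.inl.injEq]
      exact fun h => hu01 h
    have hBB' : B ≠ B' := by
      simp only [B, B', ne_eq, Sum.inr.injEq, Prod.mk.injEq, e1, e2,
        Subtype.mk.injEq, Sym2.eq_iff, Sum.inl.injEq]
      intro h
      rcases (Sym2.eq_iff.mp (congrArg Subtype.val h.1)) with ⟨h1, _⟩ | ⟨h1, _⟩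
      · exact hu01 (by simpa using h1)
      · exact hu02 (by simpa using h1)
    rcases (by have := (hc1 B).1; have := (hc1 B).2; omega : c B = 1 ∨ c B = 2) with hB | hB
    · have hA2 : c A = 2 := by
        have := hdiff A B hAB
        have := (hc1 A).1; have := (hc1 A).2
        omega
      have hV2 : c Vv = 2 := by
        have := hdiff B Vv hBV
        have := (hc1 Vv).1; have := (hc1 Vv).2
        omega
      exact hnot2 A Vv B hAV hAB hBV.symm.symm hA2 hV2
    · have hV1 : c Vv = 1 := by
        have h := hdiff B Vv hBV
        have := (hc1 Vv).1; have := (hc1 Vv).2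
        omega
      have hB'2 : c B' = 2 := by
        have := hdiff Vv B' hVB'
        have := (hc1 B').1; have := (hc1 B').2
        omega
      exact hnot2 B B' Vv hBB' hBV.symm.symm.symm hVB' hB hB'2
  -- assemble
  have hS3 : 3 ∈ {k | ∃ c, IsPackingColoring G' k c} := h3mem
  have hlb : ∀ k ∈ {k | ∃ c, IsPackingColoring G' k c}, 3 ≤ k := by
    intro k hk
    by_contra hlt
    push_neg at hlt
    obtain ⟨c, hc1, hc2⟩ := hk
    exact h2not ⟨c, fun v => ⟨(hc1 v).1, by have := (hc1 v).2; omega⟩, hc2⟩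
  exact le_antisymm (Nat.sInf_le hS3) (le_csInf ⟨3, hS3⟩ hlb)
end

section
/- If n ≥ 3 is odd and m ≥ 1, then the packing chromatic number of FSSD_m(S'(C_n)) equals 5, where S'(C_n) is the splitting graph of the cycle C_n. -/
open SimpleGraph

section Generic
open SimpleGraph

variable {V : Type*} {G : SimpleGraph V}

private lemma pack_conflict {k : ℕ} {c : V → ℕ}
    (h : IsPackingColoring G k c) {u v : V} (hne : u ≠ v)
    (hd : G.edist u v ≤ (c u : ℕ∞)) : c u ≠ c v :=
  fun he => absurd (h.2 u v hne he) (not_lt.2 hd)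

private lemma edist_le_one' {u v : V} (h : G.Adj u v) : G.edist u v ≤ 1 := by
  simpa using SimpleGraph.edist_le h.toWalk

private lemma edist_le_add' {u w v : V} {k : ℕ∞} (h : G.Adj u w) (h2 : G.edist w v ≤ k) :
    G.edist u v ≤ k + 1 := by
  calc G.edist u v ≤ G.edist u w + G.edist w v := SimpleGraph.edist_triangle
    _ ≤ 1 + k := add_le_add (edist_le_one' h) h2
    _ = k + 1 := by rw [add_comm]

private lemma edist_le_two' {u w v : V} (h1 : G.Adj u w) (h2 : G.Adj w v) :
    G.edist u v ≤ 2 := by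
  have := edist_le_add' h1 (edist_le_one' h2)
  norm_num at this; exact this

private lemma edist_le_three' {u w x v : V} (h1 : G.Adj u w) (h2 : G.Adj w x)
    (h3 : G.Adj x v) : G.edist u v ≤ 3 := by
  have := edist_le_add' h1 (edist_le_two' h2 h3)
  norm_num at this; exact this

private lemma edist_le_four' {u w x y v : V} (h1 : G.Adj u w) (h2 : G.Adj w x)
    (h3 : G.Adj x y) (h4 : G.Adj y v) : G.edist u v ≤ 4 := by
  have := edist_le_add' h1 (edist_le_three' h2 h3 h4)
  norm_num at this; exact this

private lemma two_lt_edist' {u v : V} (hne : u ≠ v) (hadj : ¬ G.Adj u v)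
    (hcom : ∀ w, G.Adj u w → G.Adj w v → False) : 2 < G.edist u v := by
  by_contra hle
  push_neg at hle
  have htop : G.edist u v ≠ ⊤ := fun ht => by simp [ht] at hle
  obtain ⟨p, hp⟩ := SimpleGraph.exists_walk_of_edist_ne_top htop
  have hl : p.length ≤ 2 := by
    rw [← hp] at hle; exact_mod_cast hle
  cases p with
  | nil => exact hne rfl
  | cons h q =>
    cases q with
    | nil => exact hadj h
    | @cons _ w _ h2 r =>
      have hr : r.length = 0 := by
        simp only [SimpleGraph.Walk.length_cons] at hl; omega
      have he := SimpleGraph.Walk.eq_of_length_eq_zero hr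
      subst he
      exact hcom _ h h2

end Generic
section FSSDlem
open SimpleGraph

variable {V : Type*} {G : SimpleGraph V} {m : ℕ}

private lemma fssd_adj_inl_inl {x y : V} : ¬ (FSSD G m).Adj (Sum.inl x) (Sum.inl y) :=
  fun h => h

private lemma fssd_adj_inr_inr {e f : G.edgeSet × Fin m} :
    ¬ (FSSD G m).Adj (Sum.inr e) (Sum.inr f) := fun h => h

private lemma fssd_adj_left {x y : V} (h : G.Adj x y) (j : Fin m) :
    (FSSD G m).Adj (Sum.inl x) (Sum.inr (⟨s(x,y), h⟩, j)) :=
  Sym2.mem_mk_left x y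

private lemma fssd_adj_right {x y : V} (h : G.Adj x y) (j : Fin m) :
    (FSSD G m).Adj (Sum.inl y) (Sum.inr (⟨s(x,y), h⟩, j)) :=
  Sym2.mem_mk_right x y

private def sideF {E : Type*} : V ⊕ E → ZMod 2 := Sum.elim (fun _ => 0) (fun _ => 1)

private lemma fssd_adj_side {a b : V ⊕ (G.edgeSet × Fin m)} (h : (FSSD G m).Adj a b) :
    sideF b = sideF a + 1 := by
  rcases a with x | e <;> rcases b with y | f
  · exact absurd h fssd_adj_inl_inl
  · show (1 : ZMod 2) = 0 + 1; decide
  · show (0 : ZMod 2) = 1 + 1; decide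
  · exact absurd h fssd_adj_inr_inr

private lemma fssd_walk_parity :
    ∀ {a b : V ⊕ (G.edgeSet × Fin m)} (p : (FSSD G m).Walk a b),
      (p.length : ZMod 2) = sideF b - sideF a := by
  intro a b p
  induction p with
  | nil => simp
  | @cons u w v h q ih =>
    have hw := fssd_adj_side h
    rw [SimpleGraph.Walk.length_cons]
    push_cast
    rw [ih, hw]
    ring

private lemma fssd_no_common {x y : V} (hadj : ¬ G.Adj x y) (hne : x ≠ y)
    (w : V ⊕ (G.edgeSet × Fin m)) (h1 : (FSSD G m).Adj (Sum.inl x) w)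
    (h2 : (FSSD G m).Adj w (Sum.inl y)) : False := by
  rcases w with z | ⟨⟨e, he⟩, j⟩
  · exact h1
  · induction e using Sym2.ind with
  | _ a b =>
      have hx : x = a ∨ x = b := Sym2.mem_iff.mp h1
      have hy : y = a ∨ y = b := Sym2.mem_iff.mp h2
      have hab : G.Adj a b := he
      rcases hx with rfl | rfl <;> rcases hy with rfl | rfl
      · exact hne rfl
      · exact hadj hab
      · exact hadj hab.symm
      · exact hne rfl

private lemma fssd_two_lt {x y : V} (hadj : ¬ G.Adj x y) (hne : x ≠ y) :
    2 < (FSSD G m).edist (Sum.inl x) (Sum.inl y) :=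
  two_lt_edist' (fun h => hne (Sum.inl.inj h)) fssd_adj_inl_inl
    (fssd_no_common hadj hne)

private lemma fssd_three_lt {x y : V} (hadj : ¬ G.Adj x y) (hne : x ≠ y) :
    3 < (FSSD G m).edist (Sum.inl x) (Sum.inl y) := by
  have h2 := fssd_two_lt (m := m) hadj hne
  have h3 : (FSSD G m).edist (Sum.inl x) (Sum.inl y) ≠ 3 := by
    intro h3
    obtain ⟨p, hp⟩ := SimpleGraph.exists_walk_of_edist_eq_coe (by exact_mod_cast h3)
    have := fssd_walk_parity p
    rw [hp] at this
    simp only [sideF, Sum.elim_inl, sub_self] at this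
    exact absurd this (by decide)
  have h31 : (2 : ℕ∞) + 1 ≤ (FSSD G m).edist (Sum.inl x) (Sum.inl y) :=
    Order.add_one_le_of_lt h2
  norm_num at h31
  exact lt_of_le_of_ne h31 (Ne.symm h3)

end FSSDlem
section CycleLem
open SimpleGraph
open Fin.CommRing Fin.NatCast

variable {N : ℕ}

private lemma fin_one_ne_zero' : (1 : Fin (N+3)) ≠ 0 := by
  intro h
  have := congrArg Fin.val h
  simp [Fin.val_one] at this

private lemma fin_two_ne_zero' : (2 : Fin (N+3)) ≠ 0 := by
  intro h
  have := congrArg Fin.val h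
  rw [Fin.val_two] at this
  simp at this

private lemma fin_ne_add_one (i : Fin (N+3)) : i ≠ i + 1 := by
  intro h
  have h1 : (1 : Fin (N+3)) = 0 := (left_eq_add.mp h).symm.symm
  exact fin_one_ne_zero' h1

private lemma fin_sub_one_ne_add_one (i : Fin (N+3)) : i - 1 ≠ i + 1 := by
  intro h
  apply fin_two_ne_zero'
  have : (2 : Fin (N+3)) = (i + 1) - (i - 1) := by ring
  rw [this, ← h, sub_self]

private lemma cyc_adj_succ (i : Fin (N+3)) :
    (SimpleGraph.cycleGraph (N+3)).Adj i (i+1) := by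
  rw [SimpleGraph.cycleGraph_adj]
  right
  ring

private lemma cyc_adj_pred (i : Fin (N+3)) :
    (SimpleGraph.cycleGraph (N+3)).Adj i (i-1) := by
  rw [SimpleGraph.cycleGraph_adj]
  left
  ring

private lemma cyc_adj_cases {p q : Fin (N+3)}
    (h : (SimpleGraph.cycleGraph (N+3)).Adj p q) : p = q + 1 ∨ q = p + 1 := by
  rw [SimpleGraph.cycleGraph_adj] at h
  rcases h with h | h
  · left; rw [sub_eq_iff_eq_add] at h; rw [h]; ring
  · right; rw [sub_eq_iff_eq_add] at h; rw [h]; ring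

private lemma cyc_nonadj {p q : Fin (N+3)}
    (hp : p ≠ Fin.last (N+2)) (hq : q ≠ Fin.last (N+2))
    (hpar : p.val % 2 = q.val % 2) :
    ¬ (SimpleGraph.cycleGraph (N+3)).Adj p q := by
  intro h
  rcases cyc_adj_cases h with h | h
  · have hv := Fin.val_add_one q
    rw [if_neg hq] at hv
    rw [h, hv] at hpar
    omega
  · have hv := Fin.val_add_one p
    rw [if_neg hp] at hv
    rw [h, hv] at hpar
    omega

end CycleLem
section SGlem
open SimpleGraph

variable {N : ℕ}

private abbrev SGr (n : ℕ) : SimpleGraph (Fin n ⊕ (Fin n × Fin 1)) :=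
  splittingGraph (SimpleGraph.cycleGraph n)

private lemma sg_adj_ll {i j : Fin (N+3)} :
    (SGr (N+3)).Adj (Sum.inl i) (Sum.inl j) ↔ (SimpleGraph.cycleGraph (N+3)).Adj i j :=
  Iff.rfl

private lemma sg_adj_lr {i j : Fin (N+3)} {t : Fin 1} :
    (SGr (N+3)).Adj (Sum.inl i) (Sum.inr (j, t)) ↔ (SimpleGraph.cycleGraph (N+3)).Adj i j :=
  Iff.rfl

private lemma sg_adj_rl {i j : Fin (N+3)} {t : Fin 1} :
    (SGr (N+3)).Adj (Sum.inr (j, t)) (Sum.inl i) ↔ (SimpleGraph.cycleGraph (N+3)).Adj i j :=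
  Iff.rfl

private lemma sg_adj_rr {p q : Fin (N+3) × Fin 1} :
    ¬ (SGr (N+3)).Adj (Sum.inr p) (Sum.inr q) := by
  rintro ⟨-, h⟩
  exact h.elim

end SGlem
section Lower
open SimpleGraph
open Fin.CommRing Fin.NatCast

private lemma pack_conflict'' {V : Type*} {G : SimpleGraph V} {k : ℕ} {c : V → ℕ}
    (h : IsPackingColoring G k c) {u v : V} (hne : u ≠ v) {K : ℕ}
    (hd : G.edist u v ≤ (K : ℕ∞)) (hK : K ≤ c u) : c u ≠ c v :=
  pack_conflict h hne (le_trans hd (by exact_mod_cast hK))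

variable {N M : ℕ}

private abbrev VtxT (N M : ℕ) :=
  (Fin (N+3) ⊕ (Fin (N+3) × Fin 1)) ⊕ ((SGr (N+3)).edgeSet × Fin (M+1))

private abbrev FGr (N M : ℕ) : SimpleGraph (VtxT N M) := FSSD (SGr (N+3)) (M+1)

private abbrev Uv (N M : ℕ) (i : Fin (N+3)) : VtxT N M := Sum.inl (Sum.inl i)

private abbrev Vvtx (N M : ℕ) (i : Fin (N+3)) : VtxT N M := Sum.inl (Sum.inr (i, 0))

private abbrev sbv (N M : ℕ) {x y : Fin (N+3) ⊕ (Fin (N+3) × Fin 1)}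
    (h : (SGr (N+3)).Adj x y) : VtxT N M := Sum.inr (⟨s(x,y), h⟩, 0)

private lemma sbv_ne {x y x' y' : Fin (N+3) ⊕ (Fin (N+3) × Fin 1)}
    {h : (SGr (N+3)).Adj x y} {h' : (SGr (N+3)).Adj x' y'}
    (hs : s(x,y) ≠ s(x',y')) : sbv N M h ≠ sbv N M h' := by
  intro he
  exact hs (congrArg (fun p => p.1.1) (Sum.inr.inj he))

private lemma no_four (hodd : Odd (N+3)) :
    ¬ ∃ c : VtxT N M → ℕ, IsPackingColoring (FGr N M) 4 c := by
  rintro ⟨c, hc⟩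
  have hbd := hc.1
  -- adjacency facts in SGr
  have aUU : ∀ i : Fin (N+3), (SGr (N+3)).Adj (Sum.inl i) (Sum.inl (i+1)) :=
    fun i => sg_adj_ll.mpr (cyc_adj_succ i)
  have aUU' : ∀ i : Fin (N+3), (SGr (N+3)).Adj (Sum.inl (i-1)) (Sum.inl i) := by
    intro i; have := aUU (i-1); rwa [sub_add_cancel] at this
  have aVUp : ∀ i : Fin (N+3), (SGr (N+3)).Adj (Sum.inr (i, (0:Fin 1))) (Sum.inl (i+1)) :=
    fun i => sg_adj_rl.mpr (cyc_adj_succ i).symm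
  have aVUm : ∀ i : Fin (N+3), (SGr (N+3)).Adj (Sum.inr (i, (0:Fin 1))) (Sum.inl (i-1)) :=
    fun i => sg_adj_rl.mpr (cyc_adj_pred i).symm
  have aVUm' : ∀ i : Fin (N+3), (SGr (N+3)).Adj (Sum.inr (i+1, (0:Fin 1))) (Sum.inl i) := by
    intro i; have := aVUm (i+1); rwa [add_sub_cancel_right] at this
  have aVUp' : ∀ i : Fin (N+3), (SGr (N+3)).Adj (Sum.inr (i-1, (0:Fin 1))) (Sum.inl i) := by
    intro i; have := aVUp (i-1); rwa [sub_add_cancel] at this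
  -- Step 1 : no U vertex has color 1
  have step1 : ∀ i, c (Uv N M i) ≠ 1 := by
    intro i h1
    have e1 := aUU' i
    have e2 := aUU i
    have e3 := aVUp' i
    have e4 := aVUm' i
    -- the four subdivision vertices around U i, all adjacent to U i
    have a1 : (FGr N M).Adj (Uv N M i) (sbv N M e1) := fssd_adj_right e1 0
    have a2 : (FGr N M).Adj (Uv N M i) (sbv N M e2) := fssd_adj_left e2 0
    have a3 : (FGr N M).Adj (Uv N M i) (sbv N M e3) := fssd_adj_right e3 0
    have a4 : (FGr N M).Adj (Uv N M i) (sbv N M e4) := fssd_adj_right e4 0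
    -- no t has color 1
    have hne1 : ∀ {x y : Fin (N+3) ⊕ (Fin (N+3) × Fin 1)}
        (h : (SGr (N+3)).Adj x y), (FGr N M).Adj (Uv N M i) (sbv N M h) →
        c (sbv N M h) ≠ 1 := by
      intro x y h ha hcol
      exact pack_conflict'' hc (by simp) (K := 1)
        (by exact_mod_cast edist_le_one' ha.symm) (le_of_eq hcol.symm)
        (hcol.trans h1.symm)
    have c1 := hne1 e1 a1
    have c2 := hne1 e2 a2
    have c3 := hne1 e3 a3
    have c4 := hne1 e4 a4
    -- pairwise distinct colors
    have hpair : ∀ {x y x' y' : Fin (N+3) ⊕ (Fin (N+3) × Fin 1)}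
        (h : (SGr (N+3)).Adj x y) (h' : (SGr (N+3)).Adj x' y'),
        (FGr N M).Adj (Uv N M i) (sbv N M h) → (FGr N M).Adj (Uv N M i) (sbv N M h') →
        sbv N M h ≠ sbv N M h' → c (sbv N M h) ≠ 1 → c (sbv N M h) ≠ c (sbv N M h') := by
      intro x y x' y' h h' ha ha' hne hc1
      refine pack_conflict'' hc hne (K := 2)
        (by exact_mod_cast edist_le_two' ha.symm ha') ?_
      have := (hbd (sbv N M h)).1
      omega
    have n12 : sbv N M e1 ≠ sbv N M e2 := by
      apply sbv_ne
      intro heq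
      rw [Sym2.eq_iff] at heq
      rcases heq with (⟨-, h⟩ | ⟨h, -⟩)
      · exact fin_ne_add_one i (Sum.inl.inj h)
      · exact fin_sub_one_ne_add_one i (Sum.inl.inj h)
    have n13 : sbv N M e1 ≠ sbv N M e3 := by
      apply sbv_ne
      intro heq
      rw [Sym2.eq_iff] at heq
      rcases heq with (⟨h, -⟩ | ⟨-, h⟩) <;> simp at h
    have n14 : sbv N M e1 ≠ sbv N M e4 := by
      apply sbv_ne
      intro heq
      rw [Sym2.eq_iff] at heq
      rcases heq with (⟨h, -⟩ | ⟨-, h⟩) <;> simp at h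
    have n23 : sbv N M e2 ≠ sbv N M e3 := by
      apply sbv_ne
      intro heq
      rw [Sym2.eq_iff] at heq
      rcases heq with (⟨h, -⟩ | ⟨-, h⟩) <;> simp at h
    have n24 : sbv N M e2 ≠ sbv N M e4 := by
      apply sbv_ne
      intro heq
      rw [Sym2.eq_iff] at heq
      rcases heq with (⟨h, -⟩ | ⟨-, h⟩) <;> simp at h
    have n34 : sbv N M e3 ≠ sbv N M e4 := by
      apply sbv_ne
      intro heq
      rw [Sym2.eq_iff] at heq
      rcases heq with (⟨h, -⟩ | ⟨h, -⟩)
      · have := Sum.inr.inj h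
        exact (fin_sub_one_ne_add_one i) (congrArg Prod.fst this)
      · simp at h
    have d12 := hpair e1 e2 a1 a2 n12 c1
    have d13 := hpair e1 e3 a1 a3 n13 c1
    have d14 := hpair e1 e4 a1 a4 n14 c1
    have d23 := hpair e2 e3 a2 a3 n23 c2
    have d24 := hpair e2 e4 a2 a4 n24 c2
    have d34 := hpair e3 e4 a3 a4 n34 c3
    have b1 := hbd (sbv N M e1)
    have b2 := hbd (sbv N M e2)
    have b3 := hbd (sbv N M e3)
    have b4 := hbd (sbv N M e4)
    omega
  -- adjacent U's have different colors
  have hadj_ne : ∀ i, c (Uv N M i) ≠ c (Uv N M (i+1)) := by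
    intro i
    have hd : (FGr N M).edist (Uv N M i) (Uv N M (i+1)) ≤ 2 :=
      edist_le_two' (fssd_adj_left (aUU i) 0) (fssd_adj_right (aUU i) 0).symm
    refine pack_conflict'' hc ?_ (K := 2) (by exact_mod_cast hd) ?_
    · intro h
      exact fin_ne_add_one i (Sum.inl.inj (Sum.inl.inj h))
    · have := (hbd (Uv N M i)).1
      have := step1 i
      omega
  -- if U k has color 4 then its two neighbours share a color
  have eq_nbrs : ∀ k, c (Uv N M k) = 4 → c (Uv N M (k-1)) = c (Uv N M (k+1)) := by
    intro k h4
    by_contra hab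
    have hk1 : k - 1 + 1 = k := sub_add_cancel k 1
    have ha4 : c (Uv N M (k+1)) ≠ 4 := fun h => (hadj_ne k) (h4.trans h.symm)
    have hb4 : c (Uv N M (k-1)) ≠ 4 := by
      intro h
      have := hadj_ne (k-1)
      rw [hk1] at this
      exact this (h.trans (h4.symm))
    have ha1 := step1 (k+1)
    have hb1 := step1 (k-1)
    have hba := (hbd (Uv N M (k+1))).1
    have hbb := (hbd (Uv N M (k+1))).2
    have hba' := (hbd (Uv N M (k-1))).1
    have hbb' := (hbd (Uv N M (k-1))).2
    -- key subdivision vertices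
    have fp := aVUp k   -- edge v_k u_{k+1}
    have fm := aVUm k   -- edge v_k u_{k-1}
    have gp := aUU k    -- edge u_k u_{k+1}
    have gm := aUU' k   -- edge u_{k-1} u_k
    -- c (Vvtx k) = 1
    have hVk4 : c (Vvtx N M k) ≠ 4 := by
      intro h
      have hd : (FGr N M).edist (Uv N M k) (Vvtx N M k) ≤ 4 :=
        edist_le_four' (fssd_adj_left gp 0) (fssd_adj_right gp 0).symm
          (fssd_adj_right fp 0) (fssd_adj_left fp 0).symm
      exact pack_conflict'' hc (by simp) (K := 4) (by exact_mod_cast hd)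
        (le_of_eq h4.symm) (h4.trans h.symm)
    have hVka : c (Vvtx N M k) ≠ c (Uv N M (k+1)) := by
      intro h
      have hd : (FGr N M).edist (Vvtx N M k) (Uv N M (k+1)) ≤ 2 :=
        edist_le_two' (fssd_adj_left fp 0) (fssd_adj_right fp 0).symm
      refine pack_conflict'' hc (by simp) (K := 2) (by exact_mod_cast hd) ?_ h
      omega
    have hVkb : c (Vvtx N M k) ≠ c (Uv N M (k-1)) := by
      intro h
      have hd : (FGr N M).edist (Vvtx N M k) (Uv N M (k-1)) ≤ 2 :=
        edist_le_two' (fssd_adj_left fm 0) (fssd_adj_right fm 0).symm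
      refine pack_conflict'' hc (by simp) (K := 2) (by exact_mod_cast hd) ?_ h
      omega
    have hVk1 : c (Vvtx N M k) = 1 := by
      have := (hbd (Vvtx N M k)).1
      have := (hbd (Vvtx N M k)).2
      omega
    -- the two subdivision vertices at v_k
    have hsp1 : c (sbv N M fp) ≠ 1 := by
      intro h
      have hd : (FGr N M).edist (sbv N M fp) (Vvtx N M k) ≤ 1 :=
        edist_le_one' (fssd_adj_left fp 0).symm
      exact pack_conflict'' hc (by simp) (K := 1) (by exact_mod_cast hd)
        (le_of_eq h.symm) (h.trans hVk1.symm)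
    have hsm1 : c (sbv N M fm) ≠ 1 := by
      intro h
      have hd : (FGr N M).edist (sbv N M fm) (Vvtx N M k) ≤ 1 :=
        edist_le_one' (fssd_adj_left fm 0).symm
      exact pack_conflict'' hc (by simp) (K := 1) (by exact_mod_cast hd)
        (le_of_eq h.symm) (h.trans hVk1.symm)
    have hsp4 : c (sbv N M fp) ≠ 4 := by
      intro h
      have hd : (FGr N M).edist (sbv N M fp) (Uv N M k) ≤ 3 :=
        edist_le_three' (fssd_adj_right fp 0).symm (fssd_adj_right gp 0)
          (fssd_adj_left gp 0).symm
      refine pack_conflict'' hc (by simp) (K := 3) (by exact_mod_cast hd) ?_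
        (h.trans h4.symm)
      omega
    have hsm4 : c (sbv N M fm) ≠ 4 := by
      intro h
      have hd : (FGr N M).edist (sbv N M fm) (Uv N M k) ≤ 3 :=
        edist_le_three' (fssd_adj_right fm 0).symm (fssd_adj_left gm 0)
          (fssd_adj_right gm 0).symm
      refine pack_conflict'' hc (by simp) (K := 3) (by exact_mod_cast hd) ?_
        (h.trans h4.symm)
      omega
    have hspa : c (sbv N M fp) ≠ c (Uv N M (k+1)) := by
      have hd : (FGr N M).edist (sbv N M fp) (Uv N M (k+1)) ≤ 1 :=
        edist_le_one' (fssd_adj_right fp 0).symm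
      refine pack_conflict'' hc (by simp) (K := 1) (by exact_mod_cast hd) ?_
      exact (hbd (sbv N M fp)).1
    have hsmb : c (sbv N M fm) ≠ c (Uv N M (k-1)) := by
      have hd : (FGr N M).edist (sbv N M fm) (Uv N M (k-1)) ≤ 1 :=
        edist_le_one' (fssd_adj_right fm 0).symm
      refine pack_conflict'' hc (by simp) (K := 1) (by exact_mod_cast hd) ?_
      exact (hbd (sbv N M fm)).1
    have hbsp := hbd (sbv N M fp)
    have hbsm := hbd (sbv N M fm)
    -- so c s+ = c (U (k-1)) and c s- = c (U (k+1))
    have hcsp : c (sbv N M fp) = c (Uv N M (k-1)) := by omega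
    have hcsm : c (sbv N M fm) = c (Uv N M (k+1)) := by omega
    -- final contradiction
    have hd_pm : (FGr N M).edist (sbv N M fp) (Uv N M (k-1)) ≤ 3 :=
      edist_le_three' (fssd_adj_left fp 0).symm (fssd_adj_left fm 0)
        (fssd_adj_right fm 0).symm
    have hd_mp : (FGr N M).edist (sbv N M fm) (Uv N M (k+1)) ≤ 3 :=
      edist_le_three' (fssd_adj_left fm 0).symm (fssd_adj_left fp 0)
        (fssd_adj_right fp 0).symm
    rcases (by omega : c (Uv N M (k-1)) = 3 ∨ c (Uv N M (k+1)) = 3) with h3 | h3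
    · exact pack_conflict'' hc (by simp) (K := 3) (by exact_mod_cast hd_pm)
        (by omega) hcsp
    · exact pack_conflict'' hc (by simp) (K := 3) (by exact_mod_cast hd_mp)
        (by omega) hcsm
  -- parity potential
  set bit : ℕ → ZMod 2 := fun x => if x = 2 then 0 else 1 with hbit
  set g : Fin (N+3) → ZMod 2 := fun i =>
    if c (Uv N M i) = 4 then bit (c (Uv N M (i+1))) + 1 else bit (c (Uv N M i)) with hg
  have hstep : ∀ i, g (i+1) = g i + 1 := by
    intro i
    by_cases h1 : c (Uv N M i) = 4
    · have h2 : c (Uv N M (i+1)) ≠ 4 := fun h => (hadj_ne i) (h1.trans h.symm)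
      simp only [hg, if_pos h1, if_neg h2]
      have : (1 + 1 : ZMod 2) = 0 := by decide
      rw [add_assoc, this, add_zero]
    · by_cases h2 : c (Uv N M (i+1)) = 4
      · have key := eq_nbrs (i+1) h2
        rw [add_sub_cancel_right] at key
        simp only [hg, if_pos h2, if_neg h1]
        rw [← key]
      · simp only [hg, if_neg h1, if_neg h2]
        have hi1 := step1 i
        have hi2 := step1 (i+1)
        have hbi := hbd (Uv N M i)
        have hbi2 := hbd (Uv N M (i+1))
        have hne := hadj_ne i
        have hcase : (c (Uv N M i) = 2 ∧ c (Uv N M (i+1)) = 3) ∨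
            (c (Uv N M i) = 3 ∧ c (Uv N M (i+1)) = 2) := by omega
        rcases hcase with ⟨h3, h4⟩ | ⟨h3, h4⟩ <;> rw [h3, h4] <;> simp [hbit] <;> decide
  have hiter : ∀ j : ℕ, g (j : Fin (N+3)) = g 0 + (j : ZMod 2) := by
    intro j
    induction j with
    | zero => simp
    | succ j ih =>
      have : ((j+1 : ℕ) : Fin (N+3)) = (j : Fin (N+3)) + 1 := by push_cast; ring
      rw [this, hstep, ih]
      push_cast
      ring
  have hfin := hiter (N+3)
  rw [Fin.natCast_self] at hfin
  have hzero : ((N+3 : ℕ) : ZMod 2) = 0 := (left_eq_add.mp hfin)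
  have hdvd : (2 : ℕ) ∣ (N+3) := (ZMod.natCast_eq_zero_iff (N+3) 2).mp hzero
  obtain ⟨t, ht⟩ := hodd
  omega

end Lower
section Upper
open SimpleGraph

variable {N M : ℕ}

private def colF (N M : ℕ) : VtxT N M → ℕ := fun w =>
  match w with
  | Sum.inr _ => 1
  | Sum.inl (Sum.inl i) => if i = Fin.last (N+2) then 4 else if i.val % 2 = 0 then 2 else 3
  | Sum.inl (Sum.inr (j, _)) => if j = Fin.last (N+2) then 5 else if j.val % 2 = 0 then 2 else 3

private lemma colF_inr (e : (SGr (N+3)).edgeSet × Fin (M+1)) :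
    colF N M (Sum.inr e) = 1 := rfl

private lemma colF_inl_ge2 (x : Fin (N+3) ⊕ (Fin (N+3) × Fin 1)) :
    2 ≤ colF N M (Sum.inl x) := by
  rcases x with i | ⟨j, t⟩ <;> simp only [colF] <;> split_ifs <;> omega

private lemma colF_inl_le5 (x : Fin (N+3) ⊕ (Fin (N+3) × Fin 1)) :
    colF N M (Sum.inl x) ≤ 5 := by
  rcases x with i | ⟨j, t⟩ <;> simp only [colF] <;> split_ifs <;> omega

private lemma colF_cases (x : Fin (N+3) ⊕ (Fin (N+3) × Fin 1)) :
    colF N M (Sum.inl x) = 2 ∨ colF N M (Sum.inl x) = 3 ∨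
    colF N M (Sum.inl x) = 4 ∨ colF N M (Sum.inl x) = 5 := by
  rcases x with i | ⟨j, t⟩ <;> simp only [colF] <;> split_ifs <;> omega

private lemma colF_four {x : Fin (N+3) ⊕ (Fin (N+3) × Fin 1)}
    (h : colF N M (Sum.inl x) = 4) : x = Sum.inl (Fin.last (N+2)) := by
  rcases x with i | ⟨j, t⟩ <;> simp only [colF] at h
  · split_ifs at h with h1 h2
    · rw [h1]
    · omega
    · omega
  · split_ifs at h <;> omega

private lemma colF_five {x : Fin (N+3) ⊕ (Fin (N+3) × Fin 1)}
    (h : colF N M (Sum.inl x) = 5) : ∃ t, x = Sum.inr (Fin.last (N+2), t) := by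
  rcases x with i | ⟨j, t⟩ <;> simp only [colF] at h
  · split_ifs at h <;> omega
  · split_ifs at h with h1 h2
    · exact ⟨t, by rw [h1]⟩
    · omega
    · omega

private lemma colF_two {x : Fin (N+3) ⊕ (Fin (N+3) × Fin 1)}
    (h : colF N M (Sum.inl x) = 2) :
    (∃ i, x = Sum.inl i ∧ i ≠ Fin.last (N+2) ∧ i.val % 2 = 0) ∨
    (∃ j t, x = Sum.inr (j, t) ∧ j ≠ Fin.last (N+2) ∧ j.val % 2 = 0) := by
  rcases x with i | ⟨j, t⟩ <;> simp only [colF] at h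
  · split_ifs at h with h1 h2
    · omega
    · exact Or.inl ⟨i, rfl, h1, h2⟩
    · omega
  · split_ifs at h with h1 h2
    · omega
    · exact Or.inr ⟨j, t, rfl, h1, h2⟩
    · omega

private lemma colF_three {x : Fin (N+3) ⊕ (Fin (N+3) × Fin 1)}
    (h : colF N M (Sum.inl x) = 3) :
    (∃ i, x = Sum.inl i ∧ i.val % 2 = 1) ∨
    (∃ j t, x = Sum.inr (j, t) ∧ j.val % 2 = 1) := by
  rcases x with i | ⟨j, t⟩ <;> simp only [colF] at h
  · split_ifs at h with h1 h2
    · omega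
    · omega
    · exact Or.inl ⟨i, rfl, by omega⟩
  · split_ifs at h with h1 h2
    · omega
    · omega
    · exact Or.inr ⟨j, t, rfl, by omega⟩

private lemma pack5 (hNeven : (N+2) % 2 = 0) :
    IsPackingColoring (FGr N M) 5 (colF N M) := by
  constructor
  · intro v
    rcases v with x | e
    · exact ⟨by have := colF_inl_ge2 (N := N) (M := M) x; omega, colF_inl_le5 x⟩
    · rw [colF_inr]; omega
  · intro u v hne hcol
    rcases u with x | e <;> rcases v with y | f
    · -- both original
      have hxy : x ≠ y := fun h => hne (congrArg Sum.inl h)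
      rcases colF_cases (N := N) (M := M) x with h2 | h3 | h4 | h5
      · -- color 2 : independent set
        have hy2 : colF N M (Sum.inl y) = 2 := hcol ▸ h2
        have hadj : ¬ (SGr (N+3)).Adj x y := by
          rcases colF_two h2 with ⟨i, rfl, hil, hip⟩ | ⟨i, t, rfl, hil, hip⟩ <;>
            rcases colF_two hy2 with ⟨j, rfl, hjl, hjp⟩ | ⟨j, s, rfl, hjl, hjp⟩
          · exact fun h => cyc_nonadj hil hjl (by omega) (sg_adj_ll.mp h)
          · exact fun h => cyc_nonadj hil hjl (by omega) (sg_adj_lr.mp h)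
          · exact fun h => cyc_nonadj hjl hil (by omega) (sg_adj_rl.mp h)
          · exact sg_adj_rr
        rw [h2]
        exact_mod_cast fssd_two_lt hadj hxy
      · -- color 3
        have hy3 : colF N M (Sum.inl y) = 3 := hcol ▸ h3
        have hlast : ∀ p : Fin (N+3), p.val % 2 = 1 → p ≠ Fin.last (N+2) := by
          intro p hp h
          rw [h] at hp
          rw [Fin.val_last] at hp
          omega
        have hadj : ¬ (SGr (N+3)).Adj x y := by
          rcases colF_three h3 with ⟨i, rfl, hip⟩ | ⟨i, t, rfl, hip⟩ <;>
            rcases colF_three hy3 with ⟨j, rfl, hjp⟩ | ⟨j, s, rfl, hjp⟩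
          · exact fun h => cyc_nonadj (hlast i hip) (hlast j hjp) (by omega) (sg_adj_ll.mp h)
          · exact fun h => cyc_nonadj (hlast i hip) (hlast j hjp) (by omega) (sg_adj_lr.mp h)
          · exact fun h => cyc_nonadj (hlast j hjp) (hlast i hip) (by omega) (sg_adj_rl.mp h)
          · exact sg_adj_rr
        rw [h3]
        exact_mod_cast fssd_three_lt hadj hxy
      · -- color 4 : unique vertex
        have hy4 : colF N M (Sum.inl y) = 4 := hcol ▸ h4
        exact absurd ((colF_four h4).trans (colF_four hy4).symm) hxy
      · -- color 5 : unique vertex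
        have hy5 : colF N M (Sum.inl y) = 5 := hcol ▸ h5
        obtain ⟨t, rfl⟩ := colF_five h5
        obtain ⟨s, rfl⟩ := colF_five hy5
        exact absurd (by rw [Subsingleton.elim t s]) hxy
    · -- inl vs inr : colors differ
      rw [colF_inr] at hcol
      have := colF_inl_ge2 (N := N) (M := M) x
      omega
    · rw [colF_inr] at hcol
      have := colF_inl_ge2 (N := N) (M := M) y
      omega
    · -- both subdivision vertices : color 1
      rw [colF_inr]
      push_cast
      refine lt_of_le_of_ne ?_ ?_
      · exact Order.one_le_iff_pos.mpr (SimpleGraph.edist_pos_of_ne hne)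
      · intro h
        exact fssd_adj_inr_inr (SimpleGraph.edist_eq_one_iff_adj.mp h.symm)

end Upper
/-- for odd `n ≥ 3`, `χ_ρ(FSSD_m(S'(C_n))) = 5`. -/
theorem stmt_15 (n m : ℕ) (hn : 3 ≤ n) (hpar : Odd n) (hm : 1 ≤ m) :
    packingChromaticNumber (FSSD (splittingGraph (SimpleGraph.cycleGraph n)) m) = 5 := by
  obtain ⟨N, rfl⟩ : ∃ N, n = N + 3 := ⟨n - 3, by omega⟩
  obtain ⟨M, rfl⟩ : ∃ M, m = M + 1 := ⟨m - 1, by omega⟩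
  have hNeven : (N+2) % 2 = 0 := by
    obtain ⟨t, ht⟩ := hpar
    omega
  have h5 : (5 : ℕ) ∈ {k | ∃ c, IsPackingColoring (FGr N M) k c} :=
    ⟨colF N M, pack5 hNeven⟩
  apply le_antisymm
  · exact Nat.sInf_le h5
  · apply le_csInf ⟨5, h5⟩
    intro k hk
    by_contra hlt
    push_neg at hlt
    obtain ⟨c, hc⟩ := hk
    exact no_four (M := M) hpar
      ⟨c, ⟨fun v => ⟨(hc.1 v).1, le_trans (hc.1 v).2 (by omega)⟩, hc.2⟩⟩
end
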